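/- Let κ be a positive integer, let G = (V,E) be a finite simple graph in which every odd cycle has length at least 2κ+1, let b : V → ℤ_{>0}, let μ be a maximum b-matching in G, and let y : V → ℚ be defined from alt as in the context. Then y_u + y_v ≥ 1 for every edge (u,v) ∈ E. -/

import Mathlib

open SimpleGraph Finset

variable {V : Type*} [Fintype V] [DecidableEq V]

/-- `μ` is a `b`-matching in `G`: a multiplicity function supported on the edges of `G`
such that the total multiplicity of the edges incident to any vertex `v` is at most
`b v`. -/
def IsBMatching (G : SimpleGraph V) [DecidableRel G.Adj] (b : V → ℕ) (μ : Sym2 V → ℕ) :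
    Prop :=
  (∀ e : Sym2 V, μ e ≠ 0 → e ∈ G.edgeSet) ∧
    ∀ v : V, ∑ e ∈ G.edgeFinset.filter (fun e => v ∈ e), μ e ≤ b v

/-- The value of a `b`-matching: the total multiplicity of all edges. -/
def bValue (G : SimpleGraph V) [DecidableRel G.Adj] (μ : Sym2 V → ℕ) : ℕ :=
  ∑ e ∈ G.edgeFinset, μ e

/-- A vertex is available w.r.t. `μ` if the total multiplicity of its incident edges is
not equal to `b v` (i.e. it is not matched). -/
def Available (G : SimpleGraph V) [DecidableRel G.Adj] (b : V → ℕ) (μ : Sym2 V → ℕ)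
    (v : V) : Prop :=
  ∑ e ∈ G.edgeFinset.filter (fun e => v ∈ e), μ e ≠ b v

/-- `p` is an alternating path w.r.t. the `b`-matching `μ`: a simple path starting at an
available vertex such that every even-indexed edge (`e_2, e_4, …`, i.e. odd position in
the 0-indexed edge list) has positive multiplicity. -/
def IsAlternating (G : SimpleGraph V) [DecidableRel G.Adj] (b : V → ℕ) (μ : Sym2 V → ℕ)
    {u v : V} (p : G.Walk u v) : Prop :=
  p.IsPath ∧ Available G b μ u ∧
    ∀ i : ℕ, ∀ h : i < p.edges.length, Odd i → 0 < μ (p.edges[i]'h)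

/-- `alt(v)`: the length of a shortest alternating path ending at `v` (`∞` if none). -/
noncomputable def altDist (G : SimpleGraph V) [DecidableRel G.Adj] (b : V → ℕ)
    (μ : Sym2 V → ℕ) (v : V) : ℕ∞ :=
  ⨅ (u : V) (p : G.Walk u v) (_ : IsAlternating G b μ p), (p.length : ℕ∞)

/-- The dual assignment `y` defined from `alt`: `y v = alt(v)/(2κ)` if `alt(v) < κ` is
even, `y v = 1 - (alt(v)-1)/(2κ)` if `alt(v) < κ` is odd, and `y v = ⌈κ/2⌉/κ`
otherwise. -/
noncomputable def yBM (G : SimpleGraph V) [DecidableRel G.Adj] (b : V → ℕ)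
    (μ : Sym2 V → ℕ) (κ : ℕ) (v : V) : ℚ :=
  if altDist G b μ v < (κ : ℕ∞) then
    (if Even (altDist G b μ v).toNat then
      ((altDist G b μ v).toNat : ℚ) / (2 * κ)
    else
      1 - (((altDist G b μ v).toNat : ℚ) - 1) / (2 * κ))
  else
    (⌈(κ : ℚ) / 2⌉ : ℚ) / κ

/-!
If `alt u = t < κ` is even, an alternating path to `u` followed by the edge `uv` shows
`alt v ≤ t + 1`. Were `alt v` also even and `< κ`, the two alternating paths joined by `uv` would
form an augmenting walk of odd length `< 2κ`. Cutting out a closed subwalk keeps such a walk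
augmenting when the subwalk is even, while an odd one would contain an odd cycle shorter than
`2κ + 1`; so some augmenting walk is a path, and augmenting along it contradicts maximality.
Hence `alt v` is odd and at most `t + 1`, or `alt v ≥ κ`, which forces `t = κ - 1`; either way
`y u + y v ≥ 1`. If neither endpoint has an even `alt` below `κ`, both `y`-values are `≥ 1/2`.
-/

namespace List

variable {α : Type*} {P : α → Prop}

def ForallOddIdx (P : α → Prop) (l : List α) : Prop :=
  ∀ i (hi : i < l.length), Odd i → P l[i]

theorem forallOddIdx_singleton (a : α) : ForallOddIdx P [a] := by
  intro i hi hodd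
  obtain rfl : i = 0 := by simpa using hi
  exact absurd hodd (by decide)

theorem ForallOddIdx.of_append_left {l₁ l₂ : List α} (h : ForallOddIdx P (l₁ ++ l₂)) :
    ForallOddIdx P l₁ := fun i hi hodd => by
  have := h i (by simp; omega) hodd
  rwa [getElem_append_left hi] at this

theorem ForallOddIdx.append {l₁ l₂ : List α} (h₁ : ForallOddIdx P l₁) (h₂ : ForallOddIdx P l₂)
    (heven : Even l₁.length) : ForallOddIdx P (l₁ ++ l₂) := by
  intro i hi hodd
  by_cases hi₁ : i < l₁.length
  · rw [getElem_append_left hi₁]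
    exact h₁ i hi₁ hodd
  · rw [getElem_append_right (by omega)]
    exact h₂ _ (by simp at hi; omega) (Nat.Odd.sub_even (by omega) hodd heven)

theorem ForallOddIdx.cons_reverse {l : List α} (h : ForallOddIdx P l) (heven : Even l.length)
    (a : α) : ForallOddIdx P (a :: l.reverse) := by
  rintro (_ | i) hi hodd
  · exact absurd hodd (by decide)
  · rw [getElem_cons_succ, getElem_reverse]
    simp only [length_cons, length_reverse] at hi
    refine h _ (by omega) ?_
    obtain ⟨k, hk⟩ := heven
    obtain ⟨m, hm⟩ := hodd
    exact ⟨k - m - 1, by omega⟩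

theorem ForallOddIdx.append_of_even_middle {l₁ l₂ l₃ : List α}
    (h : ForallOddIdx P (l₁ ++ (l₂ ++ l₃))) (heven : Even l₂.length) :
    ForallOddIdx P (l₁ ++ l₃) := by
  intro i hi hodd
  by_cases hi₁ : i < l₁.length
  · have := h i (by simp; omega) hodd
    rw [getElem_append_left hi₁] at this
    rwa [getElem_append_left hi₁]
  · have := h (i + l₂.length) (by simp at hi ⊢; omega) (hodd.add_even heven)
    rw [getElem_append_right (by omega), getElem_append_right (by omega)] at this
    rw [getElem_append_right (by omega)]
    simpa only [show i + l₂.length - l₁.length - l₂.length = i - l₁.length by omega] using this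

end List

namespace SimpleGraph.Walk

variable {α : Type*} {G : SimpleGraph α} [DecidableEq α]

theorem exists_eq_append_append_of_not_isPath :
    ∀ {u v : α} {p : G.Walk u v}, ¬ p.IsPath →
      ∃ (z : α) (q : G.Walk u z) (c : G.Walk z z) (r : G.Walk z v),
        ¬ c.Nil ∧ p = q.append (c.append r)
  | _, _, nil, hp => absurd IsPath.nil hp
  | u, _, cons h p, hp => by
    by_cases hpath : p.IsPath
    · have hu : u ∈ p.support := by simpa [cons_isPath_iff, hpath] using hp
      exact ⟨u, nil, cons h (p.takeUntil u hu), p.dropUntil u hu, not_nil_cons, by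
        simp [take_spec]⟩
    · obtain ⟨z, q, c, r, hc, rfl⟩ := exists_eq_append_append_of_not_isPath hpath
      exact ⟨z, cons h q, c, r, hc, rfl⟩

theorem exists_isCycle_odd_length_le {u : α} (c : G.Walk u u) (hodd : Odd c.length) :
    ∃ (w : α) (c' : G.Walk w w), c'.IsCycle ∧ Odd c'.length ∧ c'.length ≤ c.length := by
  induction hn : c.length using Nat.strong_induction_on generalizing u c with
  | _ n ih =>
  subst hn
  cases c with
  | nil => simp at hodd
  | cons h p =>
    -- With `p` a path, `cons h p` can only fail to be a cycle by retracing `h`: length `2`.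
    by_cases hp : p.IsPath
    · refine ⟨u, cons h p, (cons_isCycle_iff p h).mpr ⟨hp, fun he => ?_⟩, hodd, le_rfl⟩
      have := hp.length_eq_one_of_mem_edges (by rwa [Sym2.eq_swap])
      simp only [length_cons, this] at hodd
      exact absurd hodd (by decide)
    -- Otherwise `c` and `cons h (q.append r)` are shorter closed walks, one of them odd.
    · obtain ⟨z, q, c, r, hc, rfl⟩ := exists_eq_append_append_of_not_isPath hp
      have hc' := not_nil_iff_lt_length.mp hc
      simp only [length_cons, length_append] at hodd ih ⊢
      rcases Nat.even_or_odd c.length with heven | hodd_c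
      · have hlen : (cons h (q.append r)).length = q.length + r.length + 1 := by
          simp only [length_cons, length_append]
        obtain ⟨w, c', hcyc, hodd_c', hle⟩ := ih _ (by omega) (cons h (q.append r))
          (by rw [hlen, Nat.odd_iff]; rw [Nat.odd_iff] at hodd; rw [Nat.even_iff] at heven; omega)
          rfl
        exact ⟨w, c', hcyc, hodd_c', by omega⟩
      · obtain ⟨w, c', hcyc, hodd_c', hle⟩ := ih _ (by omega) c hodd_c rfl
        exact ⟨w, c', hcyc, hodd_c', by omega⟩

/-- `p.altSign e` is the sum of `(-1) ^ i` over the positions `i` of `e` in `p.edges`; adding it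
to a `b`-matching augments the matching along `p`. -/
def altSign : ∀ {u v : α}, G.Walk u v → Sym2 α → ℤ
  | _, _, nil => 0
  | _, _, @cons _ _ u w _ _ p => Pi.single s(u, w) 1 - p.altSign

theorem altSign_eq_zero_of_notMem {u v : α} {p : G.Walk u v} {e : Sym2 α} (he : e ∉ p.edges) :
    p.altSign e = 0 := by
  induction p with
  | nil => rfl
  | cons h p ih =>
    rw [edges_cons, List.mem_cons, not_or] at he
    simp [altSign, Pi.single_eq_of_ne he.1, ih he.2]

theorem IsTrail.altSign_eq {u v : α} {p : G.Walk u v} (hp : p.IsTrail) {e : Sym2 α}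
    (he : e ∈ p.edges) : p.altSign e = (-1) ^ p.edges.idxOf e := by
  induction p with
  | nil => simp at he
  | @cons u w _ h p ih =>
    rw [isTrail_cons] at hp
    rw [edges_cons, List.mem_cons] at he
    by_cases hee : e = s(u, w)
    · subst hee
      simp [altSign, altSign_eq_zero_of_notMem hp.2]
    · rw [edges_cons, List.idxOf_cons_ne _ (Ne.symm hee)]
      simp [altSign, Pi.single_eq_of_ne hee, ih hp.1 (he.resolve_left hee), pow_succ]

theorem IsTrail.zero_le_add_altSign {u v : α} {p : G.Walk u v} (hp : p.IsTrail)
    {μ : Sym2 α → ℕ} (hμ : p.edges.ForallOddIdx (0 < μ ·)) (e : Sym2 α) :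
    0 ≤ (μ e : ℤ) + p.altSign e := by
  by_cases he : e ∈ p.edges
  · rw [hp.altSign_eq he]
    rcases Nat.even_or_odd (p.edges.idxOf e) with heven | hodd
    · rw [heven.neg_one_pow]
      omega
    · have := hμ _ (List.idxOf_lt_length_iff.mpr he) hodd
      rw [List.getElem_idxOf] at this
      rw [hodd.neg_one_pow]
      omega
  · rw [altSign_eq_zero_of_notMem he]
    omega

variable [Fintype α] [DecidableRel G.Adj]

theorem sum_altSign {u v : α} (p : G.Walk u v) :
    ∑ e ∈ G.edgeFinset, p.altSign e = if Odd p.length then 1 else 0 := by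
  induction p with
  | nil => simp [altSign]
  | cons h p ih =>
    have he := G.mem_edgeSet.mpr h
    simp only [altSign, Pi.sub_apply, Finset.sum_sub_distrib, ih, Finset.sum_pi_single',
      mem_edgeFinset, he, if_true, length_cons, Nat.odd_add_one]
    split_ifs <;> simp

theorem sum_incidence_altSign {u v : α} (p : G.Walk u v) (x : α) :
    ∑ e ∈ G.edgeFinset.filter (fun e => x ∈ e), p.altSign e =
      (if x = u then 1 else 0) - (-1) ^ p.length * (if x = v then 1 else 0) := by
  induction p with
  | nil => simp [altSign]
  | cons h p ih =>
    simp only [altSign, Pi.sub_apply, Finset.sum_sub_distrib, ih, Finset.sum_pi_single',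
      Finset.mem_filter, mem_edgeFinset, Sym2.mem_iff, length_cons]
    split_ifs <;> simp_all [pow_succ]

end SimpleGraph.Walk

section BMatching

variable {G : SimpleGraph V} [DecidableRel G.Adj] {b : V → ℕ} {μ : Sym2 V → ℕ}

def IsAugmentingWalk (G : SimpleGraph V) [DecidableRel G.Adj] (b : V → ℕ) (μ : Sym2 V → ℕ)
    {x y : V} (W : G.Walk x y) : Prop :=
  Available G b μ x ∧ Available G b μ y ∧ Odd W.length ∧ W.edges.ForallOddIdx (0 < μ ·)

theorem IsBMatching.exists_bValue_eq_succ (hμ : IsBMatching G b μ) {x y : V} {W : G.Walk x y}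
    (hW : IsAugmentingWalk G b μ W) (hpath : W.IsPath) :
    ∃ μ' : Sym2 V → ℕ, IsBMatching G b μ' ∧ bValue G μ' = bValue G μ + 1 := by
  obtain ⟨hx, hy, hodd, halt⟩ := hW
  set μ' : Sym2 V → ℕ := fun e => ((μ e : ℤ) + W.altSign e).toNat
  have hμ' : ∀ e, (μ' e : ℤ) = μ e + W.altSign e :=
    fun e => Int.toNat_of_nonneg (hpath.isTrail.zero_le_add_altSign halt e)
  have hsum : ∀ S : Finset (Sym2 V),
      ((∑ e ∈ S, μ' e : ℕ) : ℤ) = ((∑ e ∈ S, μ e : ℕ) : ℤ) + ∑ e ∈ S, W.altSign e := by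
    intro S
    push_cast [hμ']
    exact Finset.sum_add_distrib
  have hxy : x ≠ y := by
    rintro rfl
    simp [(Walk.isPath_iff_nil.mp hpath).length_eq_zero] at hodd
  refine ⟨μ', ⟨fun e he => ?_, fun v => ?_⟩, ?_⟩
  · by_cases heW : e ∈ W.edges
    · exact W.edges_subset_edgeSet heW
    · have := hμ' e
      rw [Walk.altSign_eq_zero_of_notMem heW] at this
      exact hμ.1 e (by omega)
  · have hload := hsum (G.edgeFinset.filter (fun e => v ∈ e))
    rw [Walk.sum_incidence_altSign, hodd.neg_one_pow] at hload
    have hle := hμ.2 v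
    have hfree : v = x ∨ v = y → ∑ e ∈ G.edgeFinset.filter (fun e => v ∈ e), μ e ≠ b v := by
      rintro (rfl | rfl)
      exacts [hx, hy]
    split_ifs at hload with hvx hvy hvy
    · exact absurd (hvx.symm.trans hvy) hxy
    · have := hfree (.inl hvx)
      omega
    · have := hfree (.inr hvy)
      omega
    · omega
  · have hval := hsum G.edgeFinset
    rw [Walk.sum_altSign, if_pos hodd] at hval
    unfold bValue
    omega

theorem IsAugmentingWalk.of_append_append {x y z : V} {q : G.Walk x z} {c : G.Walk z z}
    {r : G.Walk z y} (hW : IsAugmentingWalk G b μ (q.append (c.append r)))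
    (hc : Even c.length) : IsAugmentingWalk G b μ (q.append r) := by
  obtain ⟨hx, hy, hodd, halt⟩ := hW
  refine ⟨hx, hy, ?_, ?_⟩
  · simp only [Walk.length_append] at hodd ⊢
    rw [Nat.odd_iff] at hodd ⊢
    rw [Nat.even_iff] at hc
    omega
  · rw [Walk.edges_append, Walk.edges_append] at halt
    rw [Walk.edges_append]
    exact halt.append_of_even_middle (by rwa [Walk.length_edges])

theorem IsBMatching.not_isAugmentingWalk (hμ : IsBMatching G b μ)
    (hmax : ∀ μ' : Sym2 V → ℕ, IsBMatching G b μ' → bValue G μ' ≤ bValue G μ) {n : ℕ}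
    (hcyc : ∀ (w : V) (c : G.Walk w w), c.IsCycle → Odd c.length → n < c.length)
    {x y : V} (W : G.Walk x y) (hlen : W.length ≤ n) : ¬ IsAugmentingWalk G b μ W := by
  induction hm : W.length using Nat.strong_induction_on generalizing x y W with
  | _ m ih =>
  subst hm
  intro hW
  by_cases hpath : W.IsPath
  · obtain ⟨μ', hμ', hval⟩ := hμ.exists_bValue_eq_succ hW hpath
    have := hmax μ' hμ'
    omega
  obtain ⟨z, q, c, r, hc, rfl⟩ := Walk.exists_eq_append_append_of_not_isPath hpath
  have hc' := Walk.not_nil_iff_lt_length.mp hc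
  simp only [Walk.length_append] at hlen ih
  rcases Nat.even_or_odd c.length with heven | hodd
  · exact ih (q.append r).length (by simp only [Walk.length_append]; omega) (q.append r)
      (by simp only [Walk.length_append]; omega) rfl (hW.of_append_append heven)
  · obtain ⟨w, c', hcyc', hodd', hle⟩ := c.exists_isCycle_odd_length_le hodd
    have := hcyc w c' hcyc' hodd'
    omega

theorem IsAlternating.forallOddIdx {u v : V} {p : G.Walk u v} (hp : IsAlternating G b μ p) :
    p.edges.ForallOddIdx (0 < μ ·) :=
  hp.2.2

theorem IsAlternating.isAugmentingWalk_append {x y u v : V} {P : G.Walk x u} {Q : G.Walk y v}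
    (hP : IsAlternating G b μ P) (hQ : IsAlternating G b μ Q) (hPe : Even P.length)
    (hQe : Even Q.length) (huv : G.Adj u v) :
    IsAugmentingWalk G b μ (P.append (Walk.cons huv Q.reverse)) := by
  refine ⟨hP.2.1, hQ.2.1, ?_, ?_⟩
  · simp only [Walk.length_append, Walk.length_cons, Walk.length_reverse]
    rw [Nat.odd_iff]
    rw [Nat.even_iff] at hPe hQe
    omega
  · rw [Walk.edges_append, Walk.edges_cons, Walk.edges_reverse]
    exact hP.forallOddIdx.append (hQ.forallOddIdx.cons_reverse (by rwa [Walk.length_edges]) _)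
      (by rwa [Walk.length_edges])

end BMatching

section AltDist

variable {G : SimpleGraph V} [DecidableRel G.Adj] {b : V → ℕ} {μ : Sym2 V → ℕ}

theorem altDist_le_length {u v : V} {p : G.Walk u v} (hp : IsAlternating G b μ p) :
    altDist G b μ v ≤ p.length :=
  iInf_le_of_le u (iInf_le_of_le p (iInf_le_of_le hp le_rfl))

theorem exists_isAlternating_length_eq_altDist {v : V} {n : ℕ} (h : altDist G b μ v = n) :
    ∃ (u : V) (p : G.Walk u v), IsAlternating G b μ p ∧ p.length = n := by
  have hlt : altDist G b μ v < (n + 1 : ℕ) := by rw [h]; exact_mod_cast n.lt_succ_self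
  simp only [altDist, iInf_lt_iff] at hlt
  obtain ⟨u, p, hp, hlen⟩ := hlt
  have hle := altDist_le_length hp
  rw [h] at hle
  have hlt : p.length < n + 1 := by exact_mod_cast hlen
  exact ⟨u, p, hp, le_antisymm (by omega) (by exact_mod_cast hle)⟩

theorem IsAlternating.takeUntil {u v w : V} {p : G.Walk u v} (hp : IsAlternating G b μ p)
    (hw : w ∈ p.support) : IsAlternating G b μ (p.takeUntil w hw) := by
  refine ⟨hp.1.takeUntil hw, hp.2.1, ?_⟩
  have hedges := congrArg Walk.edges (p.take_spec hw)
  rw [Walk.edges_append] at hedges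
  have := hp.forallOddIdx
  rw [← hedges] at this
  exact this.of_append_left

theorem IsAlternating.concat {u v w : V} {p : G.Walk u v} (hp : IsAlternating G b μ p)
    (heven : Even p.length) (hw : w ∉ p.support) (h : G.Adj v w) :
    IsAlternating G b μ (p.concat h) := by
  refine ⟨hp.1.concat hw h, hp.2.1, ?_⟩
  rw [Walk.edges_concat, List.concat_eq_append]
  exact hp.forallOddIdx.append (List.forallOddIdx_singleton _) (by rwa [Walk.length_edges])

theorem IsAlternating.altDist_le_length_add_one {u v w : V} {p : G.Walk u v}
    (hp : IsAlternating G b μ p) (heven : Even p.length) (h : G.Adj v w) :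
    altDist G b μ w ≤ p.length + 1 := by
  by_cases hw : w ∈ p.support
  · calc altDist G b μ w ≤ (p.takeUntil w hw).length := altDist_le_length (hp.takeUntil hw)
      _ ≤ p.length + 1 := by exact_mod_cast (p.length_takeUntil_le_length hw).trans p.length.le_succ
  · simpa using altDist_le_length (hp.concat heven hw h)

theorem IsBMatching.not_even_altDist_of_adj {κ : ℕ}
    (hgirth : ∀ (w : V) (c : G.Walk w w), c.IsCycle → Odd c.length → 2 * κ + 1 ≤ c.length)
    (hμ : IsBMatching G b μ)
    (hmax : ∀ μ' : Sym2 V → ℕ, IsBMatching G b μ' → bValue G μ' ≤ bValue G μ)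
    {u v : V} (huv : G.Adj u v) {s t : ℕ} (hu : altDist G b μ u = s) (hv : altDist G b μ v = t)
    (hsκ : s < κ) (htκ : t < κ) (hs : Even s) : ¬ Even t := by
  intro ht
  obtain ⟨x, P, hP, rfl⟩ := exists_isAlternating_length_eq_altDist hu
  obtain ⟨y, Q, hQ, rfl⟩ := exists_isAlternating_length_eq_altDist hv
  refine hμ.not_isAugmentingWalk hmax (n := 2 * κ - 1)
    (fun w c hc ho => by have := hgirth w c hc ho; omega) _ ?_
    (hP.isAugmentingWalk_append hQ hs ht huv)
  simp only [Walk.length_append, Walk.length_cons, Walk.length_reverse]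
  omega

theorem yBM_of_altDist_eq {v : V} {κ t : ℕ} (h : altDist G b μ v = t) (ht : t < κ) :
    yBM G b μ κ v = if Even t then (t : ℚ) / (2 * κ) else 1 - ((t : ℚ) - 1) / (2 * κ) := by
  simp [yBM, h, ht]

theorem yBM_of_le_altDist {v : V} {κ : ℕ} (h : κ ≤ altDist G b μ v) :
    yBM G b μ κ v = ⌈(κ : ℚ) / 2⌉ / κ := by
  simp [yBM, not_lt.mpr h]

theorem half_le_yBM {v : V} {κ : ℕ} (hκ : 0 < κ)
    (h : ∀ t : ℕ, altDist G b μ v = t → t < κ → ¬ Even t) : 1 / 2 ≤ yBM G b μ κ v := by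
  have hκ' : (0 : ℚ) < κ := by exact_mod_cast hκ
  by_cases hlt : altDist G b μ v < κ
  · obtain ⟨t, ht⟩ := ENat.ne_top_iff_exists.mp (ne_top_of_lt hlt)
    have htκ : t < κ := by rw [← ht] at hlt; exact_mod_cast hlt
    rw [yBM_of_altDist_eq ht.symm htκ, if_neg (h t ht.symm htκ)]
    have : (t : ℚ) ≤ κ := by exact_mod_cast htκ.le
    have : ((t : ℚ) - 1) / (2 * κ) ≤ 1 / 2 := by
      rw [div_le_iff₀ (by positivity)]
      linarith
    linarith
  · rw [yBM_of_le_altDist (not_lt.mp hlt), le_div_iff₀ hκ']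
    linarith [Int.le_ceil ((κ : ℚ) / 2)]

theorem one_le_yBM_add_yBM_of_even {κ : ℕ}
    (hgirth : ∀ (w : V) (c : G.Walk w w), c.IsCycle → Odd c.length → 2 * κ + 1 ≤ c.length)
    (hμ : IsBMatching G b μ)
    (hmax : ∀ μ' : Sym2 V → ℕ, IsBMatching G b μ' → bValue G μ' ≤ bValue G μ)
    {u v : V} (huv : G.Adj u v) {t : ℕ} (hu : altDist G b μ u = t) (htκ : t < κ)
    (ht : Even t) : 1 ≤ yBM G b μ κ u + yBM G b μ κ v := by
  obtain ⟨x, P, hP, rfl⟩ := exists_isAlternating_length_eq_altDist hu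
  have hv_le : altDist G b μ v ≤ P.length + 1 := hP.altDist_le_length_add_one ht huv
  rw [yBM_of_altDist_eq hu htκ, if_pos ht]
  by_cases hvκ : altDist G b μ v < κ
  · obtain ⟨s, hs⟩ := ENat.ne_top_iff_exists.mp (ne_top_of_lt hvκ)
    have hsκ : s < κ := by rw [← hs] at hvκ; exact_mod_cast hvκ
    have hst : s ≤ P.length + 1 := by rw [← hs] at hv_le; exact_mod_cast hv_le
    have hs_odd := hμ.not_even_altDist_of_adj hgirth hmax huv hu hs.symm htκ hsκ ht
    rw [yBM_of_altDist_eq hs.symm hsκ, if_neg hs_odd]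
    have : ((s : ℚ) - 1) / (2 * κ) ≤ P.length / (2 * κ) := by
      gcongr
      have : (s : ℚ) ≤ P.length + 1 := by exact_mod_cast hst
      linarith
    linarith
  · have hκt : κ = P.length + 1 := by
      have := (not_lt.mp hvκ).trans hv_le
      norm_cast at this
      omega
    rw [yBM_of_le_altDist (not_lt.mp hvκ)]
    obtain ⟨m, hm⟩ := ht
    rw [hm] at hκt
    subst hκt
    have hceil : ⌈((m + m + 1 : ℕ) : ℚ) / 2⌉ = m + 1 := by
      rw [Int.ceil_eq_iff]
      push_cast
      constructor <;> linarith
    rw [hceil, hm]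
    push_cast
    rw [div_add_div _ _ (by positivity) (by positivity), le_div_iff₀ (by positivity)]
    nlinarith

end AltDist

theorem stmt12_general (κ : ℕ) (hκ : 0 < κ) (G : SimpleGraph V) [DecidableRel G.Adj]
    (hgirth : ∀ (w : V) (c : G.Walk w w), c.IsCycle → Odd c.length → 2 * κ + 1 ≤ c.length)
    (b : V → ℕ)
    (μ : Sym2 V → ℕ) (hμ : IsBMatching G b μ)
    (hmax : ∀ μ' : Sym2 V → ℕ, IsBMatching G b μ' → bValue G μ' ≤ bValue G μ) :
    ∀ u v : V, G.Adj u v → 1 ≤ yBM G b μ κ u + yBM G b μ κ v := by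
  intro u v huv
  by_cases hu : ∃ t : ℕ, altDist G b μ u = t ∧ t < κ ∧ Even t
  · obtain ⟨t, ht, htκ, heven⟩ := hu
    exact one_le_yBM_add_yBM_of_even hgirth hμ hmax huv ht htκ heven
  by_cases hv : ∃ t : ℕ, altDist G b μ v = t ∧ t < κ ∧ Even t
  · obtain ⟨t, ht, htκ, heven⟩ := hv
    rw [add_comm]
    exact one_le_yBM_add_yBM_of_even hgirth hμ hmax huv.symm ht htκ heven
  simp only [not_exists, not_and] at hu hv
  linarith [half_le_yBM hκ hu, half_le_yBM hκ hv]

theorem stmt12 (κ : ℕ) (hκ : 0 < κ) (G : SimpleGraph V) [DecidableRel G.Adj]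
    (hgirth : ∀ (w : V) (c : G.Walk w w), c.IsCycle → Odd c.length → 2 * κ + 1 ≤ c.length)
    (b : V → ℕ) (hb : ∀ v : V, 0 < b v)
    (μ : Sym2 V → ℕ) (hμ : IsBMatching G b μ)
    (hmax : ∀ μ' : Sym2 V → ℕ, IsBMatching G b μ' → bValue G μ' ≤ bValue G μ) :
    ∀ u v : V, G.Adj u v → 1 ≤ yBM G b μ κ u + yBM G b μ κ v :=
  stmt12_general κ hκ G hgirth b μ hμ hmax
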